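/- arXiv:1005.2148 — 2 statements merged into one kernel-verified Lean document; each statement's English description precedes it below -/
import Mathlib

section
/- Let (G,f) be an n-ary group and a ∈ G. Then the binary operation x ∗ y = f(x, a,...,a, y) (with n−2 copies of a) makes G a group, whose identity element is the skew element ā, and in which the inverse of x is f(ā, x,...,x, x̄, ā) (with n−3 copies of x). -/
namespace NAry

variable {G : Type*} {A : Type*}

/-- One of the ways to compose two applications of an `n`-ary operation on
`2n-1` arguments: the inner application starts at position `i`. -/
def Comp (n : ℕ) (f : (ℕ → G) → G) (x : ℕ → G) (i : ℕ) : G :=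
  f (fun k => if k < i then x k else if k = i then f (fun m => x (i + m)) else x (k + n - 1))

/-- `f` depends only on its first `n` arguments. -/
def DepOn (n : ℕ) (f : (ℕ → G) → G) : Prop :=
  ∀ x y : ℕ → G, (∀ k < n, x k = y k) → f x = f y

/-- Associativity of an `n`-ary operation. -/
def Assoc (n : ℕ) (f : (ℕ → G) → G) : Prop :=
  ∀ (x : ℕ → G) (i j : ℕ), i < n → j < n → Comp n f x i = Comp n f x j

/-- Unique solvability at every place `i < n`. -/
def Solvable (n : ℕ) (f : (ℕ → G) → G) : Prop :=
  ∀ i < n, ∀ (x : ℕ → G) (x₀ : G), ∃! z : G, f (Function.update x i z) = x₀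

/-- `(G, f)` is an `n`-ary (polyadic) group. -/
def IsNAryGroup (n : ℕ) (f : (ℕ → G) → G) : Prop :=
  DepOn n f ∧ Assoc n f ∧ Solvable n f

/-- `sx` is the skew element of `x`: `f(x,…,x,sx) = x` with `n-1` copies of `x`. -/
def IsSkew (n : ℕ) (f : (ℕ → G) → G) (x sx : G) : Prop :=
  f (Function.update (fun _ => x) (n - 1) sx) = x

/-- An action of the `n`-ary group `(G,f)` on a set `A`. -/
def IsAction (n : ℕ) (f : (ℕ → G) → G) (act : G → A → A) : Prop :=
  (∀ (x : ℕ → G) (a : A), act (f x) a = (List.range n).foldr (fun i b => act (x i) b) a)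
  ∧ (∀ a : A, ∃ x : G, act x a = a)
  ∧ (∀ x : G, Function.Bijective (act x))

end NAry

open NAry

/-!
Every word occurring in the argument has the shape `(p, c, …, c, q, r)`, recorded by `tuple`;
for `n ≥ 3` the three marked places are distinct. Associativity, applied to the word
`(p, c, …, c, q, r, d, …, d, q', r')` of length `2n - 1` with the inner bracket at places
`0, n - 1` or `n - 2, n - 1`, together with cancellation at the first and last place, shows
that `(x̄, x, …, x)`, `(x, …, x, x̄)`, `(x, …, x, x̄, ·)` and `(·, x, …, x, x̄, x)` act as neutral
sequences. The group laws of `x ∗ y = f(x, a, …, a, y)` then each take one associativity step.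
-/

namespace NAry

variable {G : Type*} {n : ℕ} {f : (ℕ → G) → G}

def tuple (n : ℕ) (p c q r : G) : ℕ → G :=
  fun k => if k = 0 then p else if k = n - 2 then q else if k = n - 1 then r else c

theorem Solvable.injective_update (hsolv : Solvable n f) {i : ℕ} (hi : i < n) (x : ℕ → G) :
    Function.Injective fun z => f (Function.update x i z) := fun u v huv => by
  obtain ⟨z, -, huniq⟩ := hsolv i hi x (f (Function.update x i u))
  exact (huniq u rfl).trans (huniq v huv.symm).symm

theorem Solvable.injective_tuple_first (hsolv : Solvable n f) (hn : 1 ≤ n) (c q r : G) :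
    Function.Injective fun p => f (tuple n p c q r) := by
  convert hsolv.injective_update hn (tuple n c c q r) using 3 with p
  ext k
  simp only [tuple, Function.update_apply]
  split_ifs <;> rfl

theorem Solvable.injective_tuple_last (hsolv : Solvable n f) (hn : 2 ≤ n) (p c q : G) :
    Function.Injective fun r => f (tuple n p c q r) := by
  convert hsolv.injective_update (i := n - 1) (by omega) (tuple n p c q c) using 3 with r
  ext k
  simp only [tuple, Function.update_apply]
  split_ifs <;> first | rfl | omega

theorem comp_eq_of_forall (hdep : DepOn n f) {w outer : ℕ → G} {i : ℕ} {v : G}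
    (hv : f (fun m => w (i + m)) = v)
    (houter : ∀ k < n, outer k = if k < i then w k else if k = i then v else w (k + n - 1)) :
    Comp n f w i = f outer :=
  hdep _ _ fun k hk => by rw [houter k hk, ← hv]

theorem tuple_assoc_first_last (hdep : DepOn n f) (hassoc : Assoc n f) (hn : 2 ≤ n)
    (p c q r d q' r' : G) :
    f (tuple n (f (tuple n p c q r)) d q' r') = f (tuple n p c q (f (tuple n r d q' r'))) := by
  let w : ℕ → G := fun k =>
    if k < n - 1 then tuple n p c q r k else tuple n r d q' r' (k - (n - 1))
  have h := hassoc w 0 (n - 1) (by omega) (by omega)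
  rwa [comp_eq_of_forall hdep (hdep _ (tuple n p c q r) fun m hm => ?_) fun k hk => ?_,
    comp_eq_of_forall hdep (hdep _ (tuple n r d q' r') fun m hm => ?_) fun k hk => ?_] at h
  all_goals simp only [w, tuple]; split_ifs <;> first | rfl | omega

theorem tuple_assoc_penult_last (hdep : DepOn n f) (hassoc : Assoc n f) (hn : 3 ≤ n)
    (p c q d q' r : G) :
    f (tuple n p c (f (tuple n q d d q')) r) = f (tuple n p c q (f (tuple n d d q' r))) := by
  let w : ℕ → G := fun k =>
    if k < n - 1 then tuple n p c q d k else tuple n d d q' r (k - (n - 1))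
  have h := hassoc w (n - 2) (n - 1) (by omega) (by omega)
  rwa [comp_eq_of_forall hdep (hdep _ (tuple n q d d q') fun m hm => ?_) fun k hk => ?_,
    comp_eq_of_forall hdep (hdep _ (tuple n d d q' r) fun m hm => ?_) fun k hk => ?_] at h
  all_goals simp only [w, tuple]; split_ifs <;> first | rfl | omega

theorem IsSkew.tuple_eq {x sx : G} (hsk : IsSkew n f x sx) (hn : 2 ≤ n) :
    f (tuple n x x x sx) = x := by
  unfold IsSkew at hsk
  convert hsk using 2
  ext k
  simp only [tuple, Function.update_apply]
  split_ifs <;> first | rfl | omega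

theorem IsSkew.left_neutral (hG : IsNAryGroup n f) (hn : 3 ≤ n) {x sx : G}
    (hsk : IsSkew n f x sx) (y : G) : f (tuple n sx x x y) = y := by
  apply hG.2.2.injective_tuple_last (by omega) x x x
  have := tuple_assoc_first_last hG.1 hG.2.1 (by omega) x x x sx x x y
  rw [hsk.tuple_eq (by omega)] at this
  exact this.symm

theorem IsSkew.right_neutral (hG : IsNAryGroup n f) (hn : 3 ≤ n) {x sx : G}
    (hsk : IsSkew n f x sx) (z : G) : f (tuple n z x x sx) = z := by
  apply hG.2.2.injective_tuple_first (by omega) x x x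
  have := tuple_assoc_first_last hG.1 hG.2.1 (by omega) z x x sx x x x
  rwa [hsk.left_neutral hG hn] at this

theorem IsSkew.left_neutral_penult (hG : IsNAryGroup n f) (hn : 3 ≤ n) {x sx : G}
    (hsk : IsSkew n f x sx) (y : G) : f (tuple n x x sx y) = y := by
  apply hG.2.2.injective_tuple_last (by omega) x x sx
  have := tuple_assoc_penult_last hG.1 hG.2.1 hn x x sx x sx y
  rw [hsk.left_neutral hG hn] at this
  exact this.symm

theorem IsSkew.right_neutral_penult (hG : IsNAryGroup n f) (hn : 3 ≤ n) {x sx : G}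
    (hsk : IsSkew n f x sx) (z : G) : f (tuple n z x sx x) = z := by
  apply hG.2.2.injective_tuple_first (by omega) x sx x
  have := tuple_assoc_first_last hG.1 hG.2.1 (by omega) z x sx x x sx x
  rwa [hsk.left_neutral_penult hG hn] at this

end NAry

theorem retract_is_group {G : Type*} (n : ℕ) (hn : 3 ≤ n) (f : (ℕ → G) → G)
    (hG : IsNAryGroup n f) (a : G) (sk : G → G) (hsk : ∀ x, IsSkew n f x (sk x)) :
    let op : G → G → G := fun x y => f (fun k => if k = 0 then x else if k = n - 1 then y else a)
    let inv : G → G := fun x =>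
      f (fun k => if k = 0 then sk a else if k = n - 2 then sk x else if k = n - 1 then sk a else x)
    (∀ x y z, op (op x y) z = op x (op y z)) ∧
    (∀ x, op (sk a) x = x) ∧ (∀ x, op x (sk a) = x) ∧
    (∀ x, op x (inv x) = sk a) ∧ (∀ x, op (inv x) x = sk a) := by
  intro op inv
  have hop : ∀ x y, op x y = f (tuple n x a a y) := fun x y => by
    simp only [op]
    congr 1
    ext k
    simp only [tuple]
    split_ifs <;> first | rfl | omega
  have hinv : ∀ x, inv x = f (tuple n (sk a) x (sk x) (sk a)) := fun _ => rfl
  have hassoc := tuple_assoc_first_last hG.1 hG.2.1 (by omega)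
  refine ⟨fun x y z => ?_, fun x => ?_, fun x => ?_, fun x => ?_, fun x => ?_⟩
  · simp only [hop, hassoc]
  · rw [hop, (hsk a).left_neutral hG hn]
  · rw [hop, (hsk a).right_neutral hG hn]
  · rw [hop, hinv, ← hassoc, (hsk a).right_neutral hG hn, (hsk x).left_neutral_penult hG hn]
  · rw [hop, hinv, hassoc, (hsk a).left_neutral hG hn, (hsk x).right_neutral_penult hG hn]
end

section
/- In a semiabelian n-ary group (G,f), the conjugation relation a ∼ b ⟺ ∃ x ∈ G with f(x, a, x,...,x, x̄) = b (n−3 copies of x in the middle) is a congruence: if a_i ∼ b_i for i = 1,...,n, then f(a_1,...,a_n) ∼ f(b_1,...,b_n). -/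
open NAry

/-!
In a long product of `n + k * (n - 1)` elements, associativity lets any window of `n`
consecutive entries be evaluated first, and the semiabelian law then exchanges the two ends
of that window. Hence entries at distance `n - 1`, and so any two entries whose positions are
congruent mod `n - 1`, may be exchanged. Reading an `n × n` matrix row by row or column by
column puts entry `(r, c)` at position `r * n + c` or `c * n + r`, which are congruent mod
`n - 1`; so both readings have the same long product, which is mediality.

Mediality makes the skew map a homomorphism, `skew (f x) = f (skew ∘ x)`, and then conjugating
`f a` by `f x` is, column by column, conjugating each `a i` by `x i`.
-/

namespace NAry

variable {G : Type*} {n : ℕ} {f : (ℕ → G) → G}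

def Semiabelian (n : ℕ) (f : (ℕ → G) → G) : Prop :=
  ∀ x : ℕ → G, f (x ∘ Equiv.swap 0 (n - 1)) = f x

def IsMedial (f : (ℕ → G) → G) : Prop :=
  ∀ M : ℕ → ℕ → G, f (fun r => f (M r)) = f (fun c => f (fun r => M r c))

theorem semiabelian_iff : Semiabelian n f ↔ ∀ x : ℕ → G,
    f x = f (fun k => if k = 0 then x (n - 1) else if k = n - 1 then x 0 else x k) := by
  refine forall_congr' fun x => ?_
  rw [eq_comm]
  simp only [Function.comp_def, Equiv.swap_apply_def, apply_ite x]

def collapse (n : ℕ) (f : (ℕ → G) → G) (j : ℕ) (x : ℕ → G) : ℕ → G :=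
  fun k => if k < j then x k else if k = j then f (fun m => x (j + m)) else x (k + n - 1)

theorem collapse_of_lt {j k : ℕ} (h : k < j) (x : ℕ → G) : collapse n f j x k = x k :=
  if_pos h

theorem collapse_self (j : ℕ) (x : ℕ → G) : collapse n f j x j = f (fun m => x (j + m)) := by
  simp [collapse]

theorem collapse_of_gt {j k : ℕ} (h : j < k) (x : ℕ → G) :
    collapse n f j x k = x (k + n - 1) := by
  simp [collapse, h.not_gt, h.ne']

theorem Assoc.apply_collapse_eq (hassoc : Assoc n f) (x : ℕ → G) {i j : ℕ} (hi : i < n)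
    (hj : j < n) :
    f (collapse n f i x) = f (collapse n f j x) :=
  hassoc x i j hi hj

/-- `lprod n f k` multiplies `n + k * (n - 1)` arguments with `k + 1` applications of `f`. -/
def lprod (n : ℕ) (f : (ℕ → G) → G) : ℕ → (ℕ → G) → G
  | 0, x => f x
  | k + 1, x => lprod n f k (collapse n f 0 x)

theorem lprod_succ (k : ℕ) (x : ℕ → G) :
    lprod n f (k + 1) x = lprod n f k (collapse n f 0 x) :=
  rfl

theorem lprod_congr (hdep : DepOn n f) :
    ∀ {k : ℕ} {x y : ℕ → G}, (∀ i < n + k * (n - 1), x i = y i) →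
      lprod n f k x = lprod n f k y
  | 0, _, _, h => hdep _ _ fun i hi => h i (by omega)
  | k + 1, x, y, h => by
    rw [lprod_succ, lprod_succ]
    refine lprod_congr hdep fun i hi => ?_
    rw [add_one_mul] at h
    rcases Nat.eq_zero_or_pos i with rfl | hi₀
    · simp only [collapse_self]
      exact hdep _ _ fun m hm => h _ (by omega)
    · simp only [collapse_of_gt hi₀]
      exact h _ (by omega)

theorem collapse_collapse_comm (hdep : DepOn n f) (hn : 0 < n) {i j : ℕ} (hij : i + n ≤ j)
    (x : ℕ → G) (t : ℕ) :
    collapse n f i (collapse n f j x) t = collapse n f (j - (n - 1)) (collapse n f i x) t := by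
  rcases lt_trichotomy t i with ht | rfl | ht
  · simp only [collapse_of_lt ht, collapse_of_lt (show t < j by omega),
      collapse_of_lt (show t < j - (n - 1) by omega)]
  · rw [collapse_self, collapse_of_lt (show t < j - (n - 1) by omega), collapse_self]
    exact hdep _ _ fun m hm => collapse_of_lt (by omega) x
  rcases lt_trichotomy t (j - (n - 1)) with ht' | rfl | ht'
  · rw [collapse_of_gt ht, collapse_of_lt ht', collapse_of_gt ht,
      collapse_of_lt (show t + n - 1 < j by omega)]
  · rw [collapse_of_gt ht, collapse_self, show j - (n - 1) + n - 1 = j by omega, collapse_self]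
    congr 1
    funext m
    rw [collapse_of_gt (by omega)]
    congr 1
    omega
  · rw [collapse_of_gt ht, collapse_of_gt ht', collapse_of_gt (show j < t + n - 1 by omega),
      collapse_of_gt (show i < t + n - 1 by omega)]

theorem lprod_succ_eq_lprod_collapse (hdep : DepOn n f) (hassoc : Assoc n f) (hn : 0 < n) :
    ∀ (k j : ℕ) (x : ℕ → G), j + n ≤ n + (k + 1) * (n - 1) →
      lprod n f (k + 1) x = lprod n f k (collapse n f j x)
  | 0, j, x, hj => hassoc.apply_collapse_eq x hn (by omega)
  | k + 1, j, x, hj => by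
    rw [add_one_mul, add_one_mul] at hj
    rcases lt_or_ge j n with hjn | hjn
    · simp only [lprod_succ]
      refine lprod_congr hdep fun t _ => ?_
      rcases Nat.eq_zero_or_pos t with rfl | ht
      · simp only [collapse_self, zero_add]
        exact hassoc.apply_collapse_eq x hn hjn
      · rw [collapse_of_gt ht, collapse_of_gt ht, collapse_of_gt (by omega),
          collapse_of_gt (by omega)]
    · calc lprod n f (k + 1 + 1) x
          = lprod n f k (collapse n f (j - (n - 1)) (collapse n f 0 x)) :=
            lprod_succ_eq_lprod_collapse hdep hassoc hn k _ _ (by rw [add_one_mul]; omega)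
        _ = lprod n f (k + 1) (collapse n f j x) := by
            rw [lprod_succ]
            congr 1
            funext t
            exact (collapse_collapse_comm hdep hn (by omega) x t).symm

theorem collapse_comp_swap (hsemi : Semiabelian n f) (hn : 0 < n) (i : ℕ) (x : ℕ → G) :
    collapse n f i (x ∘ Equiv.swap i (i + (n - 1))) = collapse n f i x := by
  funext t
  rcases lt_trichotomy t i with ht | rfl | ht
  · rw [collapse_of_lt ht, collapse_of_lt ht, Function.comp_apply,
      Equiv.swap_apply_of_ne_of_ne (by omega) (by omega)]
  · rw [collapse_self, collapse_self, ← hsemi (fun m => x (t + m))]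
    congr 1
    funext m
    simp only [Function.comp_apply]
    rw [← (add_right_injective t).swap_apply, add_zero]
  · rw [collapse_of_gt ht, collapse_of_gt ht, Function.comp_apply,
      Equiv.swap_apply_of_ne_of_ne (by omega) (by omega)]

theorem lprod_comp_swap_add_sub_one (hdep : DepOn n f) (hassoc : Assoc n f)
    (hsemi : Semiabelian n f) (hn : 0 < n) :
    ∀ (k i : ℕ) (x : ℕ → G), i + n ≤ n + k * (n - 1) →
      lprod n f k (x ∘ Equiv.swap i (i + (n - 1))) = lprod n f k x
  | 0, i, x, hi => by
    obtain rfl : i = 0 := by omega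
    rw [zero_add]
    exact hsemi x
  | k + 1, i, x, hi => by
    rw [lprod_succ_eq_lprod_collapse hdep hassoc hn k i _ hi,
      lprod_succ_eq_lprod_collapse hdep hassoc hn k i _ hi, collapse_comp_swap hsemi hn]

theorem lprod_comp_swap_add_mul (hdep : DepOn n f) (hassoc : Assoc n f)
    (hsemi : Semiabelian n f) (hn : 0 < n) (k : ℕ) :
    ∀ (m i : ℕ) (x : ℕ → G), i + m * (n - 1) < n + k * (n - 1) →
      lprod n f k (x ∘ Equiv.swap i (i + m * (n - 1))) = lprod n f k x
  | 0, i, x, _ => by simp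
  | 1, i, x, hi => by
    rw [one_mul] at hi ⊢
    exact lprod_comp_swap_add_sub_one hdep hassoc hsemi hn k i x (by omega)
  | m + 2, i, x, hi => by
    rcases Nat.eq_zero_or_pos (n - 1) with hn₁ | hn₁
    · simp [hn₁]
    set p := i + (m + 1) * (n - 1)
    have hpos : 0 < (m + 1) * (n - 1) := Nat.mul_pos m.succ_pos hn₁
    have hq : i + (m + 2) * (n - 1) = p + (n - 1) := by simp only [p]; ring
    have hswap : Equiv.swap i (p + (n - 1)) =
        Equiv.swap p (p + (n - 1)) * Equiv.swap i p * Equiv.swap p (p + (n - 1)) := by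
      rw [Equiv.swap_mul_swap_mul_swap (by omega) (by omega), Equiv.swap_comm]
    rw [hq] at hi ⊢
    rw [hswap, Equiv.Perm.coe_mul, Equiv.Perm.coe_mul, ← Function.comp_assoc,
      ← Function.comp_assoc,
      lprod_comp_swap_add_sub_one hdep hassoc hsemi hn k p _ (by omega),
      lprod_comp_swap_add_mul hdep hassoc hsemi hn k (m + 1) i _ (by omega),
      lprod_comp_swap_add_sub_one hdep hassoc hsemi hn k p _ (by omega)]

theorem lprod_comp_swap_of_modEq (hdep : DepOn n f) (hassoc : Assoc n f)
    (hsemi : Semiabelian n f) (hn : 0 < n) {k i j : ℕ} (hij : i ≡ j [MOD n - 1])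
    (hi : i < n + k * (n - 1)) (hj : j < n + k * (n - 1)) (x : ℕ → G) :
    lprod n f k (x ∘ Equiv.swap i j) = lprod n f k x := by
  wlog hle : i ≤ j generalizing i j
  · rw [Equiv.swap_comm]
    exact this hij.symm hj hi (by omega)
  obtain ⟨m, hm⟩ := (Nat.modEq_iff_dvd' hle).mp hij
  obtain rfl : j = i + m * (n - 1) := by rw [mul_comm, ← hm]; omega
  exact lprod_comp_swap_add_mul hdep hassoc hsemi hn k m i x hj

theorem swap_apply_modEq {m a b : ℕ} (hab : a ≡ b [MOD m]) (t : ℕ) :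
    Equiv.swap a b t ≡ t [MOD m] := by
  rw [Equiv.swap_apply_def]
  split_ifs with ha hb
  · exact ha ▸ hab.symm
  · exact hb ▸ hab
  · rfl

theorem lprod_comp_perm (hdep : DepOn n f) (hassoc : Assoc n f) (hsemi : Semiabelian n f)
    (hn : 0 < n) {k : ℕ} (σ : Equiv.Perm ℕ) (hσ : ∀ p, n + k * (n - 1) ≤ p → σ p = p)
    (hmod : ∀ p, σ p ≡ p [MOD n - 1]) (x : ℕ → G) :
    lprod n f k (x ∘ σ) = lprod n f k x := by
  suffices key : ∀ s : Finset ℕ, (∀ p ∈ s, p < n + k * (n - 1)) → ∀ σ : Equiv.Perm ℕ,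
      (∀ p ∉ s, σ p = p) → (∀ p, σ p ≡ p [MOD n - 1]) → ∀ x : ℕ → G,
      lprod n f k (x ∘ σ) = lprod n f k x from
    key (Finset.range _) (fun p => Finset.mem_range.mp) σ
      (fun p hp => hσ p (by simpa using hp)) hmod x
  intro s
  induction s using Finset.induction_on with
  | empty =>
    intro _ σ hσ _ x
    congr 1
    funext p
    simp [hσ p (Finset.notMem_empty p)]
  | insert a s ha ih =>
    intro hs σ hσ hmod x
    have hσa : σ a < n + k * (n - 1) := by
      by_contra! hle
      have hfix : σ (σ a) = σ a := hσ _ fun hmem => by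
        have := hs _ hmem
        omega
      have := hs a (Finset.mem_insert_self a s)
      rw [σ.injective hfix] at hle
      omega
    -- `τ` fixes `a`, so the induction hypothesis applies to it
    set τ := Equiv.swap a (σ a) * σ with hτ
    have hτs : ∀ p ∉ s, τ p = p := by
      intro p hp
      by_cases hpa : p = a
      · simp [hτ, hpa]
      · have hσp : σ p = p := hσ p (by simp [hpa, hp])
        rw [hτ, Equiv.Perm.mul_apply, hσp, Equiv.swap_apply_of_ne_of_ne hpa]
        intro h
        exact hpa (σ.injective (hσp.trans h))
    have hx : x ∘ σ = (x ∘ Equiv.swap a (σ a)) ∘ τ := by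
      funext p
      simp [hτ]
    rw [hx, ih (fun p hp => hs p (Finset.mem_insert_of_mem hp)) τ hτs
      (fun p => (swap_apply_modEq (hmod a).symm _).trans (hmod p)),
      lprod_comp_swap_of_modEq hdep hassoc hsemi hn (hmod a).symm
        (hs a (Finset.mem_insert_self a s)) hσa]

def rowMajor (n : ℕ) (M : ℕ → ℕ → G) (p : ℕ) : G :=
  M (p / n) (p % n)

/-- On `[0, n * n)`, the position of entry `(r, c)` in row-major order is sent to the position
of `(c, r)`. -/
def transposeIdx (n p : ℕ) : ℕ :=
  if p < n * n then p / n + p % n * n else p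

theorem transposeIdx_div_mod_lt (hn : 0 < n) {p : ℕ} (hp : p < n * n) :
    transposeIdx n p / n = p % n ∧ transposeIdx n p % n = p / n ∧
      transposeIdx n p < n * n := by
  have hdiv : p / n < n := Nat.div_lt_of_lt_mul hp
  have hmod : p % n < n := Nat.mod_lt p hn
  simp only [transposeIdx, if_pos hp, Nat.add_mul_div_right _ _ hn, Nat.div_eq_of_lt hdiv,
    zero_add, Nat.add_mul_mod_self_right, Nat.mod_eq_of_lt hdiv, true_and]
  nlinarith

theorem transposeIdx_involutive (hn : 0 < n) : Function.Involutive (transposeIdx n) := by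
  intro p
  by_cases hp : p < n * n
  · obtain ⟨hdiv, hmod, hlt⟩ := transposeIdx_div_mod_lt hn hp
    rw [transposeIdx, if_pos hlt, hdiv, hmod, add_comm, mul_comm, Nat.div_add_mod]
  · simp [transposeIdx, hp]

theorem transposeIdx_modEq (p : ℕ) : transposeIdx n p ≡ p [MOD n - 1] := by
  unfold transposeIdx
  split_ifs
  · rcases Nat.eq_zero_or_pos n with rfl | hn
    · simp at *
    have h1 : n ≡ 1 [MOD n - 1] := Nat.modEq_sub hn
    calc p / n + p % n * n ≡ p / n + p % n * 1 [MOD n - 1] := (h1.mul_left _).add_left _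
      _ = p % n + 1 * (p / n) := by ring
      _ ≡ p % n + n * (p / n) [MOD n - 1] := (h1.symm.mul_right _).add_left _
      _ = p := Nat.mod_add_div p n
  · rfl

/-- The row-major reading of `M` with its first `r` rows already multiplied out. -/
def partialRows (n : ℕ) (f : (ℕ → G) → G) (M : ℕ → ℕ → G) (r : ℕ) (i : ℕ) : G :=
  if i < r then f (M i) else rowMajor n M (i - r + r * n)

theorem collapse_partialRows (hdep : DepOn n f) (hn : 0 < n) (M : ℕ → ℕ → G) (r : ℕ) :
    collapse n f r (partialRows n f M r) = partialRows n f M (r + 1) := by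
  funext t
  rcases lt_trichotomy t r with ht | rfl | ht
  · rw [collapse_of_lt ht, partialRows, partialRows, if_pos ht, if_pos (by omega)]
  · rw [collapse_self, partialRows, if_pos (Nat.lt_succ_self t)]
    refine hdep _ _ fun m hm => ?_
    rw [partialRows, if_neg (by omega), rowMajor, add_tsub_cancel_left,
      Nat.add_mul_div_right _ _ hn, Nat.div_eq_of_lt hm, zero_add,
      Nat.add_mul_mod_self_right, Nat.mod_eq_of_lt hm]
  · rw [collapse_of_gt ht, partialRows, partialRows, if_neg (by omega), if_neg (by omega),
      add_one_mul]
    congr 1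
    omega

theorem lprod_partialRows (hdep : DepOn n f) (hassoc : Assoc n f) (hn : 0 < n)
    (M : ℕ → ℕ → G) : ∀ s r : ℕ, r + s = n →
      lprod n f s (partialRows n f M r) = f (fun i => f (M i))
  | 0, r, h => hdep _ _ fun i hi => if_pos (by omega)
  | s + 1, r, h => by
    rw [lprod_succ_eq_lprod_collapse hdep hassoc hn s r _ (by rw [add_one_mul]; omega),
      collapse_partialRows hdep hn, lprod_partialRows hdep hassoc hn M s (r + 1) (by omega)]

theorem lprod_rowMajor (hdep : DepOn n f) (hassoc : Assoc n f) (hn : 0 < n)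
    (M : ℕ → ℕ → G) : lprod n f n (rowMajor n M) = f (fun i => f (M i)) := by
  have h : partialRows n f M 0 = rowMajor n M := by
    funext i
    simp [partialRows]
  rw [← h, lprod_partialRows hdep hassoc hn M n 0 (zero_add n)]

theorem isMedial_of_semiabelian (hdep : DepOn n f) (hassoc : Assoc n f)
    (hsemi : Semiabelian n f) (hn : 0 < n) : IsMedial f := by
  intro M
  have hlen : n + n * (n - 1) = n * n := by
    obtain ⟨m, rfl⟩ : ∃ m, n = m + 1 := ⟨n - 1, by omega⟩
    simp only [Nat.add_sub_cancel]
    ring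
  let τ := (transposeIdx_involutive hn).toPerm
  calc f (fun r => f (M r))
      = lprod n f n (rowMajor n M ∘ τ) := by
        rw [lprod_comp_perm hdep hassoc hsemi hn τ (fun p hp => ?_) transposeIdx_modEq,
          lprod_rowMajor hdep hassoc hn]
        simp [τ, transposeIdx, hlen ▸ hp]
    _ = lprod n f n (rowMajor n (fun r c => M c r)) := by
        refine lprod_congr hdep fun p hp => ?_
        obtain ⟨hdiv, hmod, -⟩ := transposeIdx_div_mod_lt hn (hlen ▸ hp)
        simp [τ, rowMajor, hdiv, hmod]
    _ = f (fun c => f (fun r => M r c)) := lprod_rowMajor hdep hassoc hn _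

theorem IsSkew.unique (hsolv : Solvable n f) (hn : 0 < n) {x s₁ s₂ : G}
    (h₁ : IsSkew n f x s₁) (h₂ : IsSkew n f x s₂) : s₁ = s₂ :=
  (hsolv (n - 1) (by omega) (fun _ => x) x).unique h₁ h₂

theorem IsMedial.isSkew (hmed : IsMedial f) {x s : ℕ → G} (h : ∀ i, IsSkew n f (x i) (s i)) :
    IsSkew n f (f x) (f s) :=
  calc f (Function.update (fun _ => f x) (n - 1) (f s))
      = f (fun r => f (fun c => Function.update (fun _ => x c) (n - 1) (s c) r)) := by
        congr 1
        funext r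
        simp only [Function.update_apply]
        split_ifs <;> rfl
    _ = f x := (hmed _).trans (congrArg f (funext h))

end NAry

theorem conjugation_congruence {G : Type*} (n : ℕ) (hn : 3 ≤ n) (f : (ℕ → G) → G)
    (hG : IsNAryGroup n f)
    (hsemi : ∀ x : ℕ → G,
      f x = f (fun k => if k = 0 then x (n - 1) else if k = n - 1 then x 0 else x k))
    (sk : G → G) (hsk : ∀ x, IsSkew n f x (sk x)) :
    let conj : G → G → Prop := fun a b =>
      ∃ x : G, f (fun k => if k = 1 then a else if k = n - 1 then sk x else x) = b
    ∀ a b : ℕ → G, (∀ i < n, conj (a i) (b i)) → conj (f a) (f b) := by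
  intro conj a b hab
  obtain ⟨hdep, hassoc, hsolv⟩ := hG
  have hmed : IsMedial f :=
    isMedial_of_semiabelian hdep hassoc (semiabelian_iff.mpr hsemi) (by omega)
  have : Nonempty G := ⟨a 0⟩
  choose! x hx using hab
  have hskew : sk (f x) = f (sk ∘ x) :=
    (hsk (f x)).unique hsolv (by omega) (hmed.isSkew fun i => hsk (x i))
  refine ⟨f x, ?_⟩
  calc f (fun k => if k = 1 then f a else if k = n - 1 then sk (f x) else f x)
      = f (fun k => f (fun c => if k = 1 then a c else if k = n - 1 then sk (x c) else x c)) := by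
        rw [hskew]
        congr 1
        funext k
        split_ifs <;> rfl
    _ = f (fun c => f (fun k => if k = 1 then a c else if k = n - 1 then sk (x c) else x c)) :=
        hmed _
    _ = f b := hdep _ _ hx
end
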